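/- The pseudo-Riemannian metric on ℝ³ given by G = [[p, 0, pφ²],[0, -p, -pφ¹],[pφ², -pφ¹, r - p(φ¹)² + p(φ²)²]] (with p, r nonzero real constants) has vanishing Riemann curvature tensor. -/

import Mathlib

open scoped BigOperators

/-- Partial derivative in the `i`-th coordinate direction on `ℝ³`. -/
noncomputable def pd (i : Fin 3) (f : (Fin 3 → ℝ) → ℝ) (x : Fin 3 → ℝ) : ℝ :=
  fderiv ℝ f x (Pi.single i 1)

/-- Christoffel symbols `Γ^k_{ij}` of the Levi-Civita connection of the metric `g`. -/
noncomputable def christoffel (g : (Fin 3 → ℝ) → Matrix (Fin 3) (Fin 3) ℝ)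
    (k i j : Fin 3) (x : Fin 3 → ℝ) : ℝ :=
  (1/2) * ∑ l, (g x)⁻¹ k l *
    (pd i (fun y => g y l j) x + pd j (fun y => g y l i) x - pd l (fun y => g y i j) x)

/-- Riemann curvature tensor `R^l_{kij}`. -/
noncomputable def riemann (g : (Fin 3 → ℝ) → Matrix (Fin 3) (Fin 3) ℝ)
    (l k i j : Fin 3) (x : Fin 3 → ℝ) : ℝ :=
  pd i (fun y => christoffel g l j k y) x - pd j (fun y => christoffel g l i k y) x
    + ∑ m, (christoffel g l i m x * christoffel g m j k x
        - christoffel g l j m x * christoffel g m i k x)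

/-- Ricci tensor `R_{jk} = R^i_{jik}`. -/
noncomputable def ricci (g : (Fin 3 → ℝ) → Matrix (Fin 3) (Fin 3) ℝ)
    (j k : Fin 3) (x : Fin 3 → ℝ) : ℝ :=
  ∑ i, riemann g i j i k x

/-- Scalar curvature `R = g^{jk} R_{jk}`. -/
noncomputable def scalarCurv (g : (Fin 3 → ℝ) → Matrix (Fin 3) (Fin 3) ℝ)
    (x : Fin 3 → ℝ) : ℝ :=
  ∑ j, ∑ k, (g x)⁻¹ j k * ricci g j k x

/-- The metric of the sigma model coming from the decomposition (6₀|1). -/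
noncomputable def metric601 (p r : ℝ) (x : Fin 3 → ℝ) : Matrix (Fin 3) (Fin 3) ℝ :=
  !![p, 0, p * x 1;
     0, -p, -p * x 0;
     p * x 1, -p * x 0, r - p * (x 0)^2 + p * (x 1)^2]

/-! Completing squares, `ds² = p (dφ¹ + φ² dφ³)² - p (dφ² + φ¹ dφ³)² + r (dφ³)²`, and in the
coordinates `U = e^{φ³} (φ¹ + φ²)`, `V = e^{-φ³} (φ¹ - φ²)`, `φ³` the metric is the constant
`p dU dV + r (dφ³)²`. Instead of transporting curvature along this change of coordinates, we
compute it: the only nonzero Christoffel symbols are `Γ¹₂₃ = Γ²₁₃ = 1`, `Γ¹₃₃ = φ¹`, `Γ²₃₃ = φ²`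
and their mirror images in the lower indices, and with these the curvature vanishes identically.
The symbols are verified after lowering the index, `g_{lm} Γᵐ_{ij} = Γ_{lij}`, so `g⁻¹` is never
computed and only `det g = -p² r ≠ 0` enters.
-/

open Matrix

section PartialDerivative

variable {f g : (Fin 3 → ℝ) → ℝ} {x : Fin 3 → ℝ}

theorem pd_const (i : Fin 3) (c : ℝ) : pd i (fun _ => c) x = 0 := by
  simp [pd]

theorem pd_coord (i m : Fin 3) :
    pd i (fun y => y m) x = if i = m then 1 else 0 := by
  simp [pd, (hasFDerivAt_apply m x).fderiv, Pi.single_apply, eq_comm]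

theorem pd_neg (i : Fin 3) :
    pd i (fun y => -f y) x = -pd i f x := by
  simp [pd, fderiv_fun_neg]

theorem pd_add (i : Fin 3) (hf : DifferentiableAt ℝ f x) (hg : DifferentiableAt ℝ g x) :
    pd i (fun y => f y + g y) x = pd i f x + pd i g x := by
  simp [pd, fderiv_fun_add hf hg]

theorem pd_sub (i : Fin 3) (hf : DifferentiableAt ℝ f x) (hg : DifferentiableAt ℝ g x) :
    pd i (fun y => f y - g y) x = pd i f x - pd i g x := by
  simp [pd, fderiv_fun_sub hf hg]

theorem pd_const_mul (i : Fin 3) (c : ℝ) (hf : DifferentiableAt ℝ f x) :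
    pd i (fun y => c * f y) x = c * pd i f x := by
  simp [pd, fderiv_const_mul hf]

theorem pd_pow (i : Fin 3) (n : ℕ) (hf : DifferentiableAt ℝ f x) :
    pd i (fun y => f y ^ n) x = n * f x ^ (n - 1) * pd i f x := by
  simp [pd, fderiv_fun_pow n hf]

end PartialDerivative

noncomputable def christoffelFirst (g : (Fin 3 → ℝ) → Matrix (Fin 3) (Fin 3) ℝ)
    (l i j : Fin 3) (x : Fin 3 → ℝ) : ℝ :=
  (1/2) * (pd i (fun y => g y l j) x + pd j (fun y => g y l i) x - pd l (fun y => g y i j) x)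

theorem christoffel_eq_of_mulVec_eq_christoffelFirst
    {g : (Fin 3 → ℝ) → Matrix (Fin 3) (Fin 3) ℝ} {x : Fin 3 → ℝ} (hg : IsUnit (g x).det)
    {Γ : Fin 3 → Fin 3 → Fin 3 → ℝ}
    (hΓ : ∀ i j, g x *ᵥ (fun m => Γ m i j) = fun l => christoffelFirst g l i j x)
    (k i j : Fin 3) : christoffel g k i j x = Γ k i j := by
  have h : christoffel g k i j x = ((g x)⁻¹ *ᵥ fun l => christoffelFirst g l i j x) k := by
    simp only [christoffel, christoffelFirst, mulVec, dotProduct, Finset.mul_sum]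
    exact Finset.sum_congr rfl fun l _ => by ring
  rw [h, ← hΓ, mulVec_mulVec, nonsing_inv_mul _ hg, one_mulVec]

def christoffel601 (k i j : Fin 3) (x : Fin 3 → ℝ) : ℝ :=
  ![!![0, 0, 0; 0, 0, 1; 0, 1, x 0], !![0, 0, 1; 0, 0, 0; 1, 0, x 1],
    !![0, 0, 0; 0, 0, 0; 0, 0, 0]] k i j

theorem det_metric601 (p r : ℝ) (x : Fin 3 → ℝ) : (metric601 p r x).det = -(p ^ 2 * r) := by
  simp [metric601, det_fin_three]
  ring

theorem pd_metric601 (p r : ℝ) (i l j : Fin 3) (x : Fin 3 → ℝ) :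
    pd i (fun y => metric601 p r y l j) x
      = ![!![0, 0, 0; 0, 0, -p; 0, -p, -(2 * p * x 0)], !![0, 0, p; 0, 0, 0; p, 0, 2 * p * x 1],
        !![0, 0, 0; 0, 0, 0; 0, 0, 0]] i l j := by
  fin_cases l <;> fin_cases j <;> fin_cases i <;>
    simp (disch := fun_prop) [metric601, pd_add, pd_sub, pd_neg, pd_const_mul, pd_pow, pd_const,
      pd_coord] <;> ring

theorem mulVec_christoffel601_eq_christoffelFirst (p r : ℝ) (x : Fin 3 → ℝ) (i j : Fin 3) :
    metric601 p r x *ᵥ (fun m => christoffel601 m i j x)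
      = fun l => christoffelFirst (metric601 p r) l i j x := by
  ext l
  simp only [christoffelFirst, pd_metric601]
  fin_cases l <;> fin_cases i <;> fin_cases j <;>
    simp [christoffel601, metric601, mulVec, dotProduct, Fin.sum_univ_three] <;> ring

theorem christoffel_metric601 {p r : ℝ} (hp : p ≠ 0) (hr : r ≠ 0) :
    christoffel (metric601 p r) = christoffel601 := by
  ext k i j x
  refine christoffel_eq_of_mulVec_eq_christoffelFirst ?_
    (mulVec_christoffel601_eq_christoffelFirst p r x) k i j
  simp [det_metric601, hp, hr]

/-- the metric of the (6₀|1) sigma model is flat. -/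
theorem riemann_metric601_eq_zero (p r : ℝ) (hp : p ≠ 0) (hr : r ≠ 0) :
    ∀ (l k i j : Fin 3) (x : Fin 3 → ℝ), riemann (metric601 p r) l k i j x = 0 := by
  intro l k i j x
  simp only [riemann, christoffel_metric601 hp hr]
  fin_cases l <;> fin_cases k <;> fin_cases i <;> fin_cases j <;>
    simp [christoffel601, Fin.sum_univ_three, pd_const, pd_coord]
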